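/- There exists an r-Smullyan model which satisfies F-Tarski+ (there is no M-predicate H such that False_M^+ = Φ(H) ∩ Sent_M^+) and T-Tarski (there is no M-predicate H with Φ(H) = True_M) but does not satisfy T-Tarski+ (there is no M-predicate H such that True_M^+ = Φ(H) ∩ Sent_M^+). Concretely, the simple model with Σ = {r, ♯} and Φ(♯) = {♯^i : i ∈ ℕ} ∪ {♯^i r♯♯ : i ∈ ℕ}, extended by the r-Smullyan rule, is such a model. -/

import Mathlib

/-- A Smullyan model over a set of symbols `α`: a set `pred` of predicates
(finite strings over `α`) satisfying the prefix-freeness requirement (†), together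
with a naming function `phi` assigning a set of strings to each string
(only its values on `pred` are relevant). -/
structure SmullyanModel (α : Type) where
  pred : Set (List α)
  prefixFree : ∀ H ∈ pred, ∀ X : List α, X ≠ [] → H ++ X ∉ pred
  phi : List α → Set (List α)

namespace SmullyanModel

variable {α : Type} (M : SmullyanModel α)

/-- The set of `M`-sentences: strings of the form `H ++ X` with `H` a predicate. -/
def sent : Set (List α) := {S | ∃ H ∈ M.pred, ∃ X : List α, S = H ++ X}

/-- `Sent_M^+ = Sent_M \ Pred_M`. -/
def sentPlus : Set (List α) := M.sent \ M.pred

/-- `True_M`: the set of true `M`-sentences. -/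
def trueSet : Set (List α) := {S | ∃ H ∈ M.pred, ∃ X ∈ M.phi H, S = H ++ X}

/-- `True_M^+ = True_M \ Pred_M`. -/
def truePlus : Set (List α) := M.trueSet \ M.pred

/-- `False_M = Sent_M \ True_M`. -/
def falseSet : Set (List α) := M.sent \ M.trueSet

/-- `False_M^+ = Sent_M^+ \ True_M^+`. -/
def falsePlus : Set (List α) := M.sentPlus \ M.truePlus

/-- `M ⊨ S`. -/
def Sat (S : List α) : Prop := S ∈ M.trueSet

/-- `S ∈ Sent_M^+` is an `M`-fixed point of `H` if `M ⊨ S ↔ M ⊨ HS`. -/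
def IsFixedPoint (H S : List α) : Prop :=
  S ∈ M.sentPlus ∧ (M.Sat S ↔ M.Sat (H ++ S))

/-- `M` is an `n`-Smullyan model (with negation symbol `n : α`):
for every predicate `H`, `nH` is a predicate and `Φ(nH) = Σ* \ Φ(H)`. -/
def IsNModel (n : α) : Prop :=
  ∀ H ∈ M.pred, (n :: H) ∈ M.pred ∧ M.phi (n :: H) = {X : List α | X ∉ M.phi H}

/-- `M` is an `r`-Smullyan model (with repeat symbol `r : α`):
for every predicate `H`, `rH` is a predicate and `Φ(rH) = {K ∈ Pred : KK ∈ Φ(H)}`. -/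
def IsRModel (r : α) : Prop :=
  ∀ H ∈ M.pred, (r :: H) ∈ M.pred ∧
    M.phi (r :: H) = {K : List α | K ∈ M.pred ∧ K ++ K ∈ M.phi H}

/-- FPT: every `M`-predicate has an `M`-fixed point. -/
def FPT : Prop := ∀ H ∈ M.pred, ∃ S : List α, M.IsFixedPoint H S

/-- T-Tarski: no `M`-predicate names `True_M`. -/
def TTarski : Prop := ¬ ∃ H ∈ M.pred, M.phi H = M.trueSet

/-- F-Tarski: no `M`-predicate names `False_M`. -/
def FTarski : Prop := ¬ ∃ H ∈ M.pred, M.phi H = M.falseSet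

/-- T-Tarski⁺: there is no `M`-predicate `H` with `True_M⁺ = Φ(H) ∩ Sent_M⁺`. -/
def TTarskiPlus : Prop := ¬ ∃ H ∈ M.pred, M.truePlus = M.phi H ∩ M.sentPlus

/-- F-Tarski⁺: there is no `M`-predicate `H` with `False_M⁺ = Φ(H) ∩ Sent_M⁺`. -/
def FTarskiPlus : Prop := ¬ ∃ H ∈ M.pred, M.falsePlus = M.phi H ∩ M.sentPlus

/-- mG1. -/
def MG1 : Prop :=
  ∀ H ∈ M.pred, M.phi H ⊆ M.trueSet →
    ∃ S ∈ M.sent, M.Sat S ∧ S ∉ M.phi H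

/-- mG1⁺. -/
def MG1Plus : Prop :=
  ∀ H ∈ M.pred, M.phi H ∩ M.sentPlus ⊆ M.truePlus →
    ∃ S ∈ M.sentPlus, M.Sat S ∧ S ∉ M.phi H

/-- G1 (for `n`-Smullyan models). -/
def G1 (n : α) : Prop :=
  ∀ H ∈ M.pred, M.phi H ⊆ M.trueSet →
    ∃ S ∈ M.sent, S ∉ M.phi H ∧ (n :: S) ∉ M.phi H

/-- G1⁺ (for `n`-Smullyan models). -/
def G1Plus (n : α) : Prop :=
  ∀ H ∈ M.pred, M.phi H ∩ M.sentPlus ⊆ M.truePlus →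
    ∃ S ∈ M.sentPlus, S ∉ M.phi H ∧ (n :: S) ∉ M.phi H

/-- The predicate set of a simple model: strings `X♯` where `X` contains no `♯`. -/
def simplePred (sharp : α) : Set (List α) :=
  {L | ∃ X : List α, sharp ∉ X ∧ L = X ++ [sharp]}

end SmullyanModel

inductive SmSym where
  | r
  | sharp
deriving DecidableEq


/-!
The predicates of the model are the strings `r^k♯`. Doubling a predicate never yields a
predicate (prefix-freeness), so the `r`-rule forces `Φ(r^{k+2}♯) = ∅`, and since `♯♯` is the only
doubled predicate in `Φ(♯)`, also `Φ(r♯) = {♯}`. Consequently `True_M = Φ(♯) \ {ε}`: the predicate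
`♯` names `True_M` among the sentences, refuting T-Tarski⁺, while `ε ∈ Φ(♯)` keeps `♯` from naming
`True_M` itself. The sentences `♯♯` (true, in `Φ(♯)`) and `♯r` (false, outside every `Φ(r^{k+1}♯)`)
witness F-Tarski⁺, and `♯♯ ∉ Φ(r^{k+1}♯)` witnesses T-Tarski for the remaining predicates.
-/

namespace SmullyanModel

variable {α : Type}

theorem simplePred_prefixFree (sharp : α) :
    ∀ H ∈ simplePred sharp, ∀ X : List α, X ≠ [] → H ++ X ∉ simplePred sharp := by
  rintro _ ⟨Y, -, rfl⟩ X hX ⟨Z, hZ, hYXZ⟩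
  obtain ⟨X', a, rfl⟩ := (X.eq_nil_or_concat').resolve_left hX
  have hZ_eq : Y ++ sharp :: X' = Z := by
    refine (List.append_inj' (t₁ := [a]) (t₂ := [sharp]) ?_ rfl).1
    rw [← hYXZ]
    simp
  exact hZ (hZ_eq ▸ by simp)

theorem singleton_mem_simplePred (sharp : α) : [sharp] ∈ simplePred sharp :=
  ⟨[], List.not_mem_nil, rfl⟩

theorem cons_mem_simplePred_iff {sharp a : α} (ha : a ≠ sharp) {H : List α} :
    a :: H ∈ simplePred sharp ↔ H ∈ simplePred sharp := by
  constructor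
  · rintro ⟨_ | ⟨b, X⟩, hX, hH⟩
    · simp_all
    · simp only [List.cons_append, List.cons.injEq] at hH
      exact ⟨X, fun h => hX (List.mem_cons_of_mem b h), hH.2⟩
  · rintro ⟨X, hX, rfl⟩
    exact ⟨a :: X, by simp [hX, ha.symm], rfl⟩

variable (M : SmullyanModel α)

theorem trueSet_subset_sent : M.trueSet ⊆ M.sent := by
  rintro _ ⟨H, hH, X, -, rfl⟩
  exact ⟨H, hH, X, rfl⟩

theorem not_tTarskiPlus_of_phi_inter_sent_eq {H : List α} (hH : H ∈ M.pred)
    (h : M.phi H ∩ M.sent = M.trueSet) : ¬ M.TTarskiPlus := fun hT =>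
  hT ⟨H, hH, by rw [truePlus, ← h, Set.inter_sdiff_assoc]; rfl⟩

variable {M} {r : α}

theorem IsRModel.nil_notMem_pred (hM : M.IsRModel r) : [] ∉ M.pred := fun h =>
  M.prefixFree [] h [r] (List.cons_ne_nil r []) (hM [] h).1

theorem IsRModel.nil_notMem_sent (hM : M.IsRModel r) : [] ∉ M.sent := by
  rintro ⟨H, hH, X, hHX⟩
  exact hM.nil_notMem_pred ((List.append_eq_nil_iff.1 hHX.symm).1 ▸ hH)

theorem IsRModel.phi_cons_cons_eq_empty (hM : M.IsRModel r) {H : List α} (hH : H ∈ M.pred) :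
    M.phi (r :: r :: H) = ∅ := by
  rw [(hM _ (hM H hH).1).2, (hM H hH).2, Set.eq_empty_iff_forall_notMem]
  rintro K ⟨hK, hKK, -⟩
  have hK_ne : K ≠ [] := fun h => hM.nil_notMem_pred (h ▸ hK)
  exact M.prefixFree K hK K hK_ne hKK

end SmullyanModel

open SmullyanModel SmSym

def phiSharp : Set (List SmSym) :=
  {L | ∃ i : ℕ, L = List.replicate i sharp} ∪
  {L | ∃ i : ℕ, L = List.replicate i sharp ++ [r, sharp, sharp]}

/-- `Φ` is defined on all strings by recursion along the `r`-rule; its values off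
`simplePred sharp` play no role. -/
def simplePhi : List SmSym → Set (List SmSym)
  | r :: H => {K | K ∈ simplePred sharp ∧ K ++ K ∈ simplePhi H}
  | [sharp] => phiSharp
  | _ => ∅

def simpleModel : SmullyanModel SmSym :=
  ⟨simplePred sharp, simplePred_prefixFree sharp, simplePhi⟩

theorem simpleModel_isRModel : simpleModel.IsRModel r :=
  fun _ hH => ⟨(cons_mem_simplePred_iff SmSym.noConfusion).2 hH, rfl⟩

theorem mem_simplePred_cases {H : List SmSym} (hH : H ∈ simplePred sharp) :
    H = [sharp] ∨ H = [r, sharp] ∨ ∃ H' ∈ simplePred sharp, H = r :: r :: H' := by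
  obtain ⟨X, hX, rfl⟩ := hH
  match X, hX with
  | [], _ => exact Or.inl rfl
  | [r], _ => exact Or.inr (Or.inl rfl)
  | r :: r :: X, hX => exact Or.inr (Or.inr ⟨X ++ [sharp], ⟨X, by simp_all, rfl⟩, rfl⟩)
  | sharp :: _, hX => simp at hX
  | r :: sharp :: _, hX => simp at hX

theorem count_r_le_one_of_mem_phiSharp {L : List SmSym} (hL : L ∈ phiSharp) :
    L.count r ≤ 1 := by
  rcases hL with ⟨i, rfl⟩ | ⟨i, rfl⟩ <;> simp [List.count_replicate]

theorem sharp_cons_mem_phiSharp {L : List SmSym} (hL : L ∈ phiSharp) : sharp :: L ∈ phiSharp := by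
  rcases hL with ⟨i, rfl⟩ | ⟨i, rfl⟩
  · exact Or.inl ⟨i + 1, rfl⟩
  · exact Or.inr ⟨i + 1, rfl⟩

theorem sharp_r_notMem_phiSharp : [sharp, r] ∉ phiSharp := by
  rintro (⟨i, hi⟩ | ⟨i, hi⟩)
  · simpa [List.count_replicate] using congrArg (List.count r) hi
  · simpa using congrArg List.length hi

theorem simpleModel_phi_r_sharp : simpleModel.phi [r, sharp] = {[sharp]} := by
  ext K
  refine ⟨fun ⟨hK, hKK⟩ => ?_, ?_⟩
  · have hK_count : K.count r = 0 := by
      have := count_r_le_one_of_mem_phiSharp hKK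
      rw [List.count_append] at this
      omega
    rcases mem_simplePred_cases hK with rfl | rfl | ⟨H, -, rfl⟩ <;> simp_all
  · rintro rfl
    exact ⟨singleton_mem_simplePred sharp, Or.inl ⟨2, rfl⟩⟩

theorem simpleModel_phi_subset_of_ne_sharp {H : List SmSym} (hH : H ∈ simplePred sharp)
    (hH_ne : H ≠ [sharp]) : simpleModel.phi H ⊆ {[sharp]} := by
  rcases mem_simplePred_cases hH with rfl | rfl | ⟨H', hH', rfl⟩
  · exact (hH_ne rfl).elim
  · exact simpleModel_phi_r_sharp.subset
  · simp [simpleModel_isRModel.phi_cons_cons_eq_empty hH']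

theorem simpleModel_trueSet : simpleModel.trueSet = phiSharp \ {[]} := by
  ext S
  constructor
  · intro hS
    have hS_ne : S ∉ ({[]} : Set (List SmSym)) := by
      rintro rfl
      exact simpleModel_isRModel.nil_notMem_sent (trueSet_subset_sent _ hS)
    refine ⟨?_, hS_ne⟩
    obtain ⟨H, hH, X, hX, rfl⟩ := hS
    rcases mem_simplePred_cases hH with rfl | rfl | ⟨H', hH', rfl⟩
    · exact sharp_cons_mem_phiSharp hX
    · rw [simpleModel_phi_r_sharp, Set.mem_singleton_iff] at hX
      subst hX
      exact Or.inr ⟨0, rfl⟩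
    · simp [simpleModel_isRModel.phi_cons_cons_eq_empty hH'] at hX
  · rintro ⟨(⟨_ | i, rfl⟩ | ⟨_ | i, rfl⟩), hS⟩
    · simp at hS
    · exact ⟨[sharp], singleton_mem_simplePred sharp, _, Or.inl ⟨i, rfl⟩, rfl⟩
    · exact ⟨[r, sharp], ⟨[r], by simp, rfl⟩, [sharp], by simp [simpleModel_phi_r_sharp], rfl⟩
    · exact ⟨[sharp], singleton_mem_simplePred sharp, _, Or.inr ⟨i, rfl⟩, rfl⟩

theorem simpleModel_phi_sharp_inter_sent :
    simpleModel.phi [sharp] ∩ simpleModel.sent = simpleModel.trueSet := by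
  refine Set.Subset.antisymm (fun S ⟨hS, hS_sent⟩ => ?_) fun S hS =>
    ⟨(simpleModel_trueSet ▸ hS).1, trueSet_subset_sent _ hS⟩
  rw [simpleModel_trueSet]
  refine ⟨hS, ?_⟩
  rintro rfl
  exact simpleModel_isRModel.nil_notMem_sent hS_sent

theorem sharp_sharp_mem_trueSet : [sharp, sharp] ∈ simpleModel.trueSet := by
  rw [simpleModel_trueSet]
  exact ⟨Or.inl ⟨2, rfl⟩, by simp⟩

theorem simpleModel_tTarski : simpleModel.TTarski := by
  rintro ⟨H, hH, hphi⟩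
  by_cases hH_sharp : H = [sharp]
  · subst hH_sharp
    have h_nil : [] ∈ simpleModel.phi [sharp] := Or.inl ⟨0, rfl⟩
    rw [hphi, simpleModel_trueSet] at h_nil
    exact h_nil.2 rfl
  · have h := simpleModel_phi_subset_of_ne_sharp hH hH_sharp (hphi ▸ sharp_sharp_mem_trueSet)
    simp at h

theorem simpleModel_fTarskiPlus : simpleModel.FTarskiPlus := by
  rintro ⟨H, hH, hphi⟩
  have sharp_append_notMem_pred (X : List SmSym) (hX : X ≠ []) : [sharp] ++ X ∉ simplePred sharp :=
    simplePred_prefixFree sharp [sharp] (singleton_mem_simplePred sharp) X hX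
  by_cases hH_sharp : H = [sharp]
  · subst hH_sharp
    have hSS : [sharp, sharp] ∈ simpleModel.phi [sharp] ∩ simpleModel.sentPlus :=
      ⟨Or.inl ⟨2, rfl⟩, trueSet_subset_sent _ sharp_sharp_mem_trueSet,
        sharp_append_notMem_pred [sharp] (by simp)⟩
    rw [← hphi] at hSS
    exact hSS.2 ⟨sharp_sharp_mem_trueSet, hSS.1.2⟩
  · have hSR : [sharp, r] ∈ simpleModel.falsePlus := by
      refine ⟨⟨⟨[sharp], singleton_mem_simplePred sharp, [r], rfl⟩,
        sharp_append_notMem_pred [r] (by simp)⟩, fun h => ?_⟩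
      rw [truePlus, simpleModel_trueSet] at h
      exact sharp_r_notMem_phiSharp h.1.1
    have h := simpleModel_phi_subset_of_ne_sharp hH hH_sharp (hphi ▸ hSR).1
    simp at h

/-- There is an `r`-simple model (Σ = {r, ♯}, Φ(♯) = {♯^i : i ∈ ℕ} ∪ {♯^i r♯♯ : i ∈ ℕ})
satisfying F-Tarski⁺ and T-Tarski but not T-Tarski⁺. -/
theorem stmt_16 :
    ∃ M : SmullyanModel SmSym,
      M.pred = SmullyanModel.simplePred SmSym.sharp ∧
      M.IsRModel SmSym.r ∧
      M.phi [SmSym.sharp] =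
        {L : List SmSym | ∃ i : ℕ, L = List.replicate i SmSym.sharp} ∪
        {L : List SmSym | ∃ i : ℕ,
          L = List.replicate i SmSym.sharp ++ [SmSym.r, SmSym.sharp, SmSym.sharp]} ∧
      M.FTarskiPlus ∧
      M.TTarski ∧
      ¬ M.TTarskiPlus :=
  ⟨simpleModel, rfl, simpleModel_isRModel, rfl, simpleModel_fTarskiPlus, simpleModel_tTarski,
    not_tTarskiPlus_of_phi_inter_sent_eq simpleModel (singleton_mem_simplePred sharp)
      simpleModel_phi_sharp_inter_sent⟩
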